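/- arXiv:2104.05381 — 7 statements merged into one kernel-verified Lean document; each statement's English description precedes it below -/
import Mathlib

section
/- Let φ be a Bernstein function with q = φ(0) > 0 or more generally with φ(Re z) > 0. Then for all z with Re(z) > 0, |φ(Re(z))| ≤ |φ(z)|, i.e. the modulus of φ along a vertical line is minimized on the real axis. -/
open MeasureTheory Set

/-! On the real point `x = Re z` every term of `φ` is real, so positivity gives `‖φ x‖ = Re φ x`. Moving off the
real axis leaves `q + d Re z` unchanged and can only increase the real part of the integrand,
since `Re (1 - e^{-zy}) ≥ 1 - |e^{-zy}| = 1 - e^{-xy}`. Hence `‖φ x‖ ≤ Re φ z ≤ ‖φ z‖`. -/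

namespace Complex

lemma re_one_sub_exp_ofReal_re_le (w : ℂ) : (1 - exp (w.re : ℂ)).re ≤ (1 - exp w).re := by
  rw [sub_re, sub_re, ← ofReal_exp, ofReal_re, ← norm_exp]
  linarith [re_le_norm (exp w)]

variable {ν : Measure ℝ}

lemma integral_one_sub_exp_neg_ofReal_mul (x : ℝ) :
    ∫ y, (1 - exp (-((x : ℂ) * y))) ∂ν = ((∫ y, (1 - Real.exp (-(x * y))) ∂ν : ℝ) : ℂ) := by
  rw [← integral_complex_ofReal]
  push_cast
  rfl

lemma re_integral_one_sub_exp_neg_mul_le {z : ℂ}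
    (hz : Integrable (fun y : ℝ => 1 - exp (-(z * y))) ν)
    (hx : Integrable (fun y : ℝ => 1 - exp (-((z.re : ℂ) * y))) ν) :
    (∫ y, (1 - exp (-((z.re : ℂ) * y))) ∂ν).re ≤ (∫ y, (1 - exp (-(z * y))) ∂ν).re := by
  calc (∫ y, (1 - exp (-((z.re : ℂ) * y))) ∂ν).re
      = ∫ y, (1 - exp (-((z.re : ℂ) * y))).re ∂ν := (integral_re hx).symm
    _ ≤ ∫ y, (1 - exp (-(z * y))).re ∂ν := integral_mono hx.re hz.re fun y => by
        have h := re_one_sub_exp_ofReal_re_le (-(z * y))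
        rwa [show ((-(z * y)).re : ℂ) = -(z.re * y) by simp] at h
    _ = (∫ y, (1 - exp (-(z * y))) ∂ν).re := integral_re hz

end Complex

theorem bernstein_abs_real_le_abs_general
    (q d : ℝ)
    (μ : Measure ℝ)
    (φ : ℂ → ℂ)
    (hφ : ∀ z : ℂ, 0 < z.re →
      φ z = (q : ℂ) + (d : ℂ) * z
        + ∫ y in Set.Ioi (0:ℝ), (1 - Complex.exp (-(z * (y : ℂ)))) ∂μ)
    (hint : ∀ z : ℂ, 0 < z.re →
      IntegrableOn (fun y : ℝ => 1 - Complex.exp (-(z * (y : ℂ)))) (Set.Ioi 0) μ)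
    (hpos : ∀ x : ℝ, 0 < x → 0 < (φ (x : ℂ)).re) :
    ∀ z : ℂ, 0 < z.re → ‖φ ((z.re : ℂ))‖ ≤ ‖φ z‖ := by
  intro z hz
  have hx : 0 < (z.re : ℂ).re := hz
  have hle := Complex.re_integral_one_sub_exp_neg_mul_le (hint z hz) (hint _ hx)
  rw [Complex.integral_one_sub_exp_neg_ofReal_mul, Complex.ofReal_re] at hle
  set r := q + d * z.re + ∫ y in Ioi 0, (1 - Real.exp (-(z.re * y))) ∂μ
  have hφx : φ z.re = (r : ℂ) := by
    rw [hφ _ hx, Complex.integral_one_sub_exp_neg_ofReal_mul]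
    push_cast [r]
    rfl
  have hr_le : r ≤ (φ z).re := by
    rw [hφ z hz]
    simp only [Complex.add_re, Complex.ofReal_re, Complex.re_ofReal_mul]
    linarith
  have hr_pos : 0 < r := by simpa [hφx] using hpos z.re hz
  rw [hφx, Complex.norm_real, Real.norm_of_nonneg hr_pos.le]
  exact hr_le.trans (Complex.re_le_norm _)

theorem bernstein_abs_real_le_abs
    (q d : ℝ) (hq : 0 ≤ q) (hd : 0 ≤ d)
    (μ : Measure ℝ)
    (hμ : ∫⁻ y in Set.Ioi (0:ℝ), ENNReal.ofReal (min y 1) ∂μ < ⊤)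
    (φ : ℂ → ℂ)
    (hφ : ∀ z : ℂ, 0 < z.re →
      φ z = (q : ℂ) + (d : ℂ) * z
        + ∫ y in Set.Ioi (0:ℝ), (1 - Complex.exp (-(z * (y : ℂ)))) ∂μ)
    (hint : ∀ z : ℂ, 0 < z.re →
      IntegrableOn (fun y : ℝ => 1 - Complex.exp (-(z * (y : ℂ)))) (Set.Ioi 0) μ)
    (hpos : ∀ x : ℝ, 0 < x → 0 < (φ (x : ℂ)).re) :
    ∀ z : ℂ, 0 < z.re → ‖φ ((z.re : ℂ))‖ ≤ ‖φ z‖ :=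
  bernstein_abs_real_le_abs_general q d μ φ hφ hint hpos
end

section
/- Let φ be a Bernstein function. Then for all z with Re(z) > 0, |φ'(z)/φ(z)| ≤ 2/Re(z). -/
open MeasureTheory Set Filter

open scoped Complex Topology

/-! For `x = Re z > 0` and `y ≥ 0`,
`x ‖y e^{-zy}‖ = xy e^{-xy} ≤ 1 - e^{-xy} ≤ Re (1 - e^{-zy})`,
the middle step being `t + 1 ≤ e^t`. Differentiating under the integral sign (the derivative of
the integrand is dominated by a multiple of `min y 1`) and integrating this pointwise inequality
gives `Re z * ‖φ' z‖ ≤ Re (φ z) ≤ ‖φ z‖`, which is even the bound `1 / Re z`. -/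

theorem Real.mul_exp_neg_le_one_sub_exp_neg (t : ℝ) :
    t * Real.exp (-t) ≤ 1 - Real.exp (-t) := by
  have h : (t + 1) * Real.exp (-t) ≤ 1 :=
    calc (t + 1) * Real.exp (-t) ≤ Real.exp t * Real.exp (-t) := by
          gcongr; exact Real.add_one_le_exp t
      _ = 1 := by rw [← Real.exp_add, add_neg_cancel, Real.exp_zero]
  linarith

theorem Real.mul_exp_neg_mul_le {a y : ℝ} (ha : 0 < a) (hy : 0 ≤ y) :
    y * Real.exp (-(a * y)) ≤ (1 + a⁻¹) * min y 1 := by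
  rcases le_total y 1 with hy1 | hy1
  · have : Real.exp (-(a * y)) ≤ 1 := Real.exp_le_one_iff.mpr (by nlinarith)
    rw [min_eq_left hy1]
    nlinarith [inv_pos.mpr ha]
  · have key : a * y * Real.exp (-(a * y)) ≤ 1 := by
      linarith [Real.mul_exp_neg_le_one_sub_exp_neg (a * y), Real.exp_pos (-(a * y))]
    rw [min_eq_right hy1, mul_one]
    calc y * Real.exp (-(a * y)) = a⁻¹ * (a * y * Real.exp (-(a * y))) := by field_simp
      _ ≤ a⁻¹ * 1 := by gcongr
      _ ≤ 1 + a⁻¹ := by linarith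

theorem Complex.norm_ofReal_mul_exp_neg_mul (w : ℂ) {y : ℝ} (hy : 0 ≤ y) :
    ‖(y : ℂ) * cexp (-(w * y))‖ = y * Real.exp (-(w.re * y)) := by
  rw [norm_mul, Complex.norm_exp, Complex.norm_real, Real.norm_of_nonneg hy]
  simp

theorem Complex.re_mul_norm_ofReal_mul_exp_neg_mul_le (z : ℂ) {y : ℝ} (hy : 0 ≤ y) :
    z.re * ‖(y : ℂ) * cexp (-(z * y))‖ ≤ (1 - cexp (-(z * y))).re := by
  have hcos : (cexp (-(z * y))).re ≤ Real.exp (-(z.re * y)) := by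
    rw [Complex.exp_re]
    simp only [Complex.neg_re, Complex.mul_re, Complex.ofReal_re, Complex.ofReal_im, mul_zero,
      sub_zero]
    exact mul_le_of_le_one_right (Real.exp_pos _).le (Real.cos_le_one _)
  rw [Complex.norm_ofReal_mul_exp_neg_mul z hy, ← mul_assoc, Complex.sub_re, Complex.one_re]
  linarith [Real.mul_exp_neg_le_one_sub_exp_neg (z.re * y)]

section LaplaceIntegral

variable {ν : Measure ℝ} {z : ℂ}

theorem integrable_min_one_of_lintegral_lt_top (hν : ∀ᵐ y ∂ν, 0 ≤ y)
    (h : ∫⁻ y, ENNReal.ofReal (min y 1) ∂ν < ⊤) : Integrable (fun y => min y 1) ν :=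
  ⟨(measurable_id.min measurable_const).aestronglyMeasurable,
    (hasFiniteIntegral_iff_ofReal (hν.mono fun _ hy => le_min hy zero_le_one)).mpr h⟩

theorem hasDerivAt_integral_one_sub_exp_neg_mul (hν : ∀ᵐ y ∂ν, 0 ≤ y)
    (hmin : Integrable (fun y => min y 1) ν) (hz : 0 < z.re)
    (hF : Integrable (fun y : ℝ => 1 - cexp (-(z * y))) ν) :
    Integrable (fun y : ℝ => (y : ℂ) * cexp (-(z * y))) ν ∧
      HasDerivAt (fun w => ∫ y, (1 - cexp (-(w * y))) ∂ν)
        (∫ y, (y : ℂ) * cexp (-(z * y)) ∂ν) z := by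
  refine hasDerivAt_integral_of_dominated_loc_of_deriv_le
    (F := fun w (y : ℝ) => 1 - cexp (-(w * y)))
    (F' := fun w (y : ℝ) => (y : ℂ) * cexp (-(w * y)))
    (Metric.ball_mem_nhds z (half_pos hz))
    (.of_forall fun w => (by fun_prop : Continuous _).aestronglyMeasurable) hF
    (by fun_prop : Continuous _).aestronglyMeasurable ?_ (hmin.const_mul (1 + (z.re / 2)⁻¹)) ?_
  · filter_upwards [hν] with y hy w hw
    have hre : z.re / 2 ≤ w.re := by
      have := (Complex.abs_re_le_norm (w - z)).trans_lt (mem_ball_iff_norm.mp hw)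
      rw [Complex.sub_re] at this
      linarith [(abs_lt.mp this).1]
    rw [Complex.norm_ofReal_mul_exp_neg_mul w hy]
    calc y * Real.exp (-(w.re * y)) ≤ y * Real.exp (-(z.re / 2 * y)) := by gcongr
      _ ≤ _ := Real.mul_exp_neg_mul_le (half_pos hz) hy
  · refine .of_forall fun y w _ => ?_
    simpa [mul_comm] using
      ((hasDerivAt_mul_const (y : ℂ)).neg.cexp.const_sub 1 : HasDerivAt _ _ w)

theorem re_mul_norm_integral_le_re_integral (hν : ∀ᵐ y ∂ν, 0 ≤ y) (hz : 0 ≤ z.re)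
    (hF : Integrable (fun y : ℝ => 1 - cexp (-(z * y))) ν)
    (hF' : Integrable (fun y : ℝ => (y : ℂ) * cexp (-(z * y))) ν) :
    z.re * ‖∫ y, (y : ℂ) * cexp (-(z * y)) ∂ν‖ ≤
      (∫ y, (1 - cexp (-(z * y))) ∂ν).re :=
  calc z.re * ‖∫ y, (y : ℂ) * cexp (-(z * y)) ∂ν‖
      ≤ z.re * ∫ y, ‖(y : ℂ) * cexp (-(z * y))‖ ∂ν := by
        gcongr; exact norm_integral_le_integral_norm _
    _ = ∫ y, z.re * ‖(y : ℂ) * cexp (-(z * y))‖ ∂ν := (integral_const_mul _ _).symm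
    _ ≤ ∫ y, (1 - cexp (-(z * y))).re ∂ν := integral_mono_ae (hF'.norm.const_mul _) hF.re <|
        hν.mono fun _ hy => Complex.re_mul_norm_ofReal_mul_exp_neg_mul_le z hy
    _ = (∫ y, (1 - cexp (-(z * y))) ∂ν).re := integral_re hF

end LaplaceIntegral

/-- `ν` stands for the Lévy measure restricted to `(0, ∞)`. -/
noncomputable def bernsteinFun (q d : ℝ) (ν : Measure ℝ) (z : ℂ) : ℂ :=
  q + d * z + ∫ y, (1 - cexp (-(z * y))) ∂ν

section BernsteinFun

variable {q d : ℝ} {ν : Measure ℝ} {z : ℂ}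

theorem hasDerivAt_bernsteinFun (hν : ∀ᵐ y ∂ν, 0 ≤ y)
    (hmin : Integrable (fun y => min y 1) ν) (hz : 0 < z.re)
    (hF : Integrable (fun y : ℝ => 1 - cexp (-(z * y))) ν) :
    HasDerivAt (bernsteinFun q d ν) (d + ∫ y, (y : ℂ) * cexp (-(z * y)) ∂ν) z := by
  have hlin : HasDerivAt (fun w : ℂ => q + d * w) d z := by
    simpa using ((hasDerivAt_id z).const_mul (d : ℂ)).const_add (q : ℂ)
  exact hlin.add (hasDerivAt_integral_one_sub_exp_neg_mul hν hmin hz hF).2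

theorem re_mul_norm_deriv_bernsteinFun_le (hq : 0 ≤ q) (hd : 0 ≤ d)
    (hν : ∀ᵐ y ∂ν, 0 ≤ y) (hmin : Integrable (fun y => min y 1) ν) (hz : 0 < z.re)
    (hF : Integrable (fun y : ℝ => 1 - cexp (-(z * y))) ν) :
    z.re * ‖deriv (bernsteinFun q d ν) z‖ ≤ (bernsteinFun q d ν z).re := by
  have hF' := (hasDerivAt_integral_one_sub_exp_neg_mul hν hmin hz hF).1
  have hint := re_mul_norm_integral_le_re_integral hν hz.le hF hF'
  rw [(hasDerivAt_bernsteinFun hν hmin hz hF).deriv, bernsteinFun]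
  calc z.re * ‖(d : ℂ) + ∫ y, (y : ℂ) * cexp (-(z * y)) ∂ν‖
      ≤ z.re * (d + ‖∫ y, (y : ℂ) * cexp (-(z * y)) ∂ν‖) := by
        gcongr
        exact (norm_add_le _ _).trans_eq (by rw [Complex.norm_real, Real.norm_of_nonneg hd])
    _ ≤ _ := by
        simp only [Complex.add_re, Complex.ofReal_re, Complex.re_ofReal_mul]
        linarith

end BernsteinFun

theorem bernstein_logderiv_bound_general
    (q d : ℝ) (hq : 0 ≤ q) (hd : 0 ≤ d)
    (μ : Measure ℝ)
    (hμ : ∫⁻ y in Set.Ioi (0:ℝ), ENNReal.ofReal (min y 1) ∂μ < ⊤)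
    (φ : ℂ → ℂ)
    (hφ : ∀ z : ℂ, 0 < z.re →
      φ z = (q : ℂ) + (d : ℂ) * z
        + ∫ y in Set.Ioi (0:ℝ), (1 - Complex.exp (-(z * (y : ℂ)))) ∂μ)
    (hint : ∀ z : ℂ, 0 < z.re →
      IntegrableOn (fun y : ℝ => 1 - Complex.exp (-(z * (y : ℂ)))) (Set.Ioi 0) μ) :
    ∀ z : ℂ, 0 < z.re → ‖deriv φ z / φ z‖ ≤ 2 / z.re := by
  intro z hz
  have hν : ∀ᵐ y ∂μ.restrict (Ioi 0), 0 ≤ y :=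
    (ae_restrict_mem measurableSet_Ioi).mono fun _ hy => le_of_lt hy
  have hφ_eq : φ =ᶠ[𝓝 z] bernsteinFun q d (μ.restrict (Ioi 0)) :=
    eventually_of_mem ((isOpen_lt continuous_const Complex.continuous_re).mem_nhds hz) hφ
  have key : z.re * ‖deriv φ z‖ ≤ ‖φ z‖ := by
    rw [hφ_eq.deriv_eq, hφ_eq.eq_of_nhds]
    exact (re_mul_norm_deriv_bernsteinFun_le hq hd hν
      (integrable_min_one_of_lintegral_lt_top hν hμ) hz (hint z hz)).trans (Complex.re_le_norm _)
  rw [norm_div]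
  refine div_le_of_le_mul₀ (norm_nonneg _) (by positivity) ?_
  calc ‖deriv φ z‖ ≤ ‖φ z‖ / z.re := by rwa [le_div_iff₀' hz]
    _ ≤ 2 / z.re * ‖φ z‖ := by
        rw [div_mul_eq_mul_div]
        gcongr
        linarith [norm_nonneg (φ z)]

theorem bernstein_logderiv_bound
    (q d : ℝ) (hq : 0 ≤ q) (hd : 0 ≤ d)
    (μ : Measure ℝ)
    (hμ : ∫⁻ y in Set.Ioi (0:ℝ), ENNReal.ofReal (min y 1) ∂μ < ⊤)
    (hnz : 0 < q ∨ 0 < d ∨ 0 < μ (Set.Ioi (0:ℝ)))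
    (φ : ℂ → ℂ)
    (hφ : ∀ z : ℂ, 0 < z.re →
      φ z = (q : ℂ) + (d : ℂ) * z
        + ∫ y in Set.Ioi (0:ℝ), (1 - Complex.exp (-(z * (y : ℂ)))) ∂μ)
    (hint : ∀ z : ℂ, 0 < z.re →
      IntegrableOn (fun y : ℝ => 1 - Complex.exp (-(z * (y : ℂ)))) (Set.Ioi 0) μ)
    (hdiff : ∀ z : ℂ, 0 < z.re → DifferentiableAt ℂ φ z) :
    ∀ z : ℂ, 0 < z.re → ‖deriv φ z / φ z‖ ≤ 2 / z.re :=
  bernstein_logderiv_bound_general q d hq hd μ hμ φ hφ hint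
end

section
/- Let μ be a Lévy measure on (0,∞) with tail μ̄(x) = μ((x,∞)) and I(x) = ∫₀^x μ̄(y) dy. Then for all x > 0, 2x μ̄(2x)/I(2x) ≤ I(2x)/I(x) ≤ 1 + x μ̄(x)/I(x). In particular, liminf_{x→0} x μ̄(x)/I(x) > 0 if and only if liminf_{x→0} I(2x)/I(x) > 1. -/
open MeasureTheory Set Filter

theorem tail_integral_ratio_bounds
    (mubar : ℝ → ℝ)
    (hnn : ∀ y : ℝ, 0 < y → 0 ≤ mubar y)
    (hmono : AntitoneOn mubar (Set.Ioi 0))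
    (hint : ∀ x : ℝ, 0 < x → IntervalIntegrable mubar MeasureTheory.volume 0 x)
    (I : ℝ → ℝ)
    (hI : ∀ x : ℝ, I x = ∫ y in (0:ℝ)..x, mubar y)
    (hIpos : ∀ x : ℝ, 0 < x → 0 < I x) :
    (∀ x : ℝ, 0 < x →
        2 * x * mubar (2 * x) / I (2 * x) ≤ I (2 * x) / I x
        ∧ I (2 * x) / I x ≤ 1 + x * mubar x / I x)
    ∧ ((0 < Filter.liminf (fun x : ℝ => x * mubar x / I x)
            (nhdsWithin 0 (Set.Ioi 0)))
        ↔ (1 < Filter.liminf (fun x : ℝ => I (2 * x) / I x)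
            (nhdsWithin 0 (Set.Ioi 0)))) := by
  -- integrability on subintervals
  have hii : ∀ a b : ℝ, 0 ≤ a → a ≤ b → 0 < b →
      IntervalIntegrable mubar MeasureTheory.volume a b := by
    intro a b ha hab hb
    refine (hint b hb).mono_set ?_
    rw [Set.uIcc_of_le hab, Set.uIcc_of_le hb.le]
    exact Set.Icc_subset_Icc ha le_rfl
  -- lower bound for integrals
  have hlow : ∀ a b : ℝ, 0 ≤ a → a < b →
      (b - a) * mubar b ≤ ∫ y in a..b, mubar y := by
    intro a b ha hab
    have hb : 0 < b := ha.trans_lt hab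
    have hib := hii a b ha hab.le hb
    have hae : (fun _ : ℝ => mubar b) ≤ᵐ[MeasureTheory.volume.restrict (Set.Icc a b)] mubar := by
      have h1 : ∀ᵐ y ∂(MeasureTheory.volume.restrict (Set.Icc a b)), y ∈ Set.Icc a b :=
        ae_restrict_mem measurableSet_Icc
      have h2 : ∀ᵐ y : ℝ ∂(MeasureTheory.volume.restrict (Set.Icc a b)), y ≠ a :=
        ae_restrict_of_ae (by
          have h0 : (MeasureTheory.volume : Measure ℝ) {a} = 0 := measure_singleton a
          filter_upwards [measure_eq_zero_iff_ae_notMem.mp h0] with y hy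
          simpa using hy)
      filter_upwards [h1, h2] with y hy hya
      have hya' : a < y := lt_of_le_of_ne hy.1 (Ne.symm hya)
      exact hmono (ha.trans_lt hya') hb hy.2
    calc (b - a) * mubar b = ∫ _ in a..b, mubar b := by
          rw [intervalIntegral.integral_const, smul_eq_mul]
      _ ≤ ∫ y in a..b, mubar y :=
          intervalIntegral.integral_mono_ae_restrict hab.le intervalIntegrable_const hib hae
  -- upper bound for integrals
  have hup : ∀ a b : ℝ, 0 < a → a ≤ b →
      (∫ y in a..b, mubar y) ≤ (b - a) * mubar a := by
    intro a b ha hab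
    have hib := hii a b ha.le hab (ha.trans_le hab)
    calc (∫ y in a..b, mubar y) ≤ ∫ _ in a..b, mubar a := by
          refine intervalIntegral.integral_mono_on hab hib intervalIntegrable_const ?_
          intro y hy
          exact hmono ha (ha.trans_le hy.1) hy.1
      _ = (b - a) * mubar a := by rw [intervalIntegral.integral_const, smul_eq_mul]
  -- x * mubar x ≤ I x
  have hxle : ∀ x : ℝ, 0 < x → x * mubar x ≤ I x := by
    intro x hx
    have h := hlow 0 x le_rfl hx
    rw [sub_zero] at h
    rw [hI]; exact h
  -- additivity
  have hadd : ∀ x : ℝ, 0 < x → I (2 * x) = I x + ∫ y in x..(2 * x), mubar y := by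
    intro x hx
    have h2x : (0:ℝ) < 2 * x := by linarith
    rw [hI, hI]
    exact (intervalIntegral.integral_add_adjacent_intervals (hint x hx)
      (hii x (2 * x) hx.le (by linarith) h2x)).symm
  have hJlo : ∀ x : ℝ, 0 < x → x * mubar (2 * x) ≤ ∫ y in x..(2 * x), mubar y := by
    intro x hx
    have h := hlow x (2 * x) hx.le (by linarith)
    have h2 : 2 * x - x = x := by ring
    rwa [h2] at h
  have hJhi : ∀ x : ℝ, 0 < x → (∫ y in x..(2 * x), mubar y) ≤ x * mubar x := by
    intro x hx
    have h := hup x (2 * x) hx (by linarith)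
    have h2 : 2 * x - x = x := by ring
    rwa [h2] at h
  have hImono : ∀ x : ℝ, 0 < x → I x ≤ I (2 * x) := by
    intro x hx
    have h1 := hJlo x hx
    have h2 : 0 ≤ x * mubar (2 * x) := mul_nonneg hx.le (hnn _ (by linarith))
    have h3 := hadd x hx
    linarith
  -- the two pointwise inequalities
  have hpt : ∀ x : ℝ, 0 < x →
      2 * x * mubar (2 * x) / I (2 * x) ≤ I (2 * x) / I x
      ∧ I (2 * x) / I x ≤ 1 + x * mubar x / I x := by
    intro x hx
    have h2x : (0:ℝ) < 2 * x := by linarith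
    have hI2 := hIpos _ h2x
    have hI1 := hIpos _ hx
    constructor
    · rw [div_le_div_iff₀ hI2 hI1]
      have ha : 2 * x * mubar (2 * x) ≤ I (2 * x) := hxle _ h2x
      have hb : I x ≤ I (2 * x) := hImono x hx
      have hnn2 : 0 ≤ 2 * x * mubar (2 * x) := mul_nonneg h2x.le (hnn _ h2x)
      exact mul_le_mul ha hb hI1.le hI2.le
    · have key : I (2 * x) ≤ I x + x * mubar x := by
        have h1 := hadd x hx
        have h2 := hJhi x hx
        linarith
      calc I (2 * x) / I x ≤ (I x + x * mubar x) / I x := by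
            exact div_le_div_of_nonneg_right key hI1.le
        _ = 1 + x * mubar x / I x := by
            rw [add_div, div_self hI1.ne']
  refine ⟨hpt, ?_⟩
  set L := nhdsWithin (0:ℝ) (Set.Ioi 0) with hL
  set f : ℝ → ℝ := fun x => x * mubar x / I x with hf
  set g : ℝ → ℝ := fun x => I (2 * x) / I x with hg
  have hmem : ∀ᶠ x in L, x ∈ Set.Ioi (0:ℝ) := self_mem_nhdsWithin
  have hf0 : ∀ x : ℝ, 0 < x → 0 ≤ f x := fun x hx =>
    div_nonneg (mul_nonneg hx.le (hnn x hx)) (hIpos x hx).le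
  have hf1 : ∀ x : ℝ, 0 < x → f x ≤ 1 := fun x hx =>
    (div_le_one (hIpos x hx)).mpr (hxle x hx)
  have hgf : ∀ x : ℝ, 0 < x → g x ≤ 1 + f x := fun x hx => (hpt x hx).2
  have hg2 : ∀ x : ℝ, 0 < x → 1 + f (2 * x) / 2 ≤ g x := by
    intro x hx
    have h2x : (0:ℝ) < 2 * x := by linarith
    have hI2 := hIpos _ h2x
    have hI1 := hIpos _ hx
    have hJ := hJlo x hx
    have hJnn : 0 ≤ ∫ y in x..(2 * x), mubar y :=
      le_trans (mul_nonneg hx.le (hnn _ h2x)) hJ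
    have h1 : f (2 * x) / 2 = x * mubar (2 * x) / I (2 * x) := by
      simp only [hf]
      field_simp
    have h2 : x * mubar (2 * x) / I (2 * x) ≤ (∫ y in x..(2 * x), mubar y) / I x :=
      div_le_div₀ hJnn hJ hI1 (hImono x hx)
    have h3 : g x = 1 + (∫ y in x..(2 * x), mubar y) / I x := by
      simp only [hg]
      rw [hadd x hx, add_div, div_self hI1.ne']
    rw [h1, h3]
    linarith
  have hg1 : ∀ x : ℝ, 0 < x → 1 ≤ g x := by
    intro x hx
    have h := hg2 x hx
    have h2 : 0 ≤ f (2 * x) := hf0 _ (by linarith)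
    linarith
  have htend : Filter.Tendsto (fun x : ℝ => 2 * x) L L := by
    rw [hL]
    refine tendsto_nhdsWithin_of_tendsto_nhds_of_eventually_within _ ?_ ?_
    · have : Filter.Tendsto (fun x : ℝ => 2 * x) (nhds 0) (nhds (2 * 0)) :=
        (continuous_const.mul continuous_id).tendsto 0
      simpa using this.mono_left nhdsWithin_le_nhds
    · filter_upwards [self_mem_nhdsWithin] with x hx
      exact Set.mem_Ioi.mpr (by simp at hx ⊢; linarith)
  have hfbdd : L.IsBoundedUnder (· ≥ ·) f :=
    ⟨0, Filter.eventually_map.mpr (hmem.mono fun x hx => hf0 x hx)⟩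
  have hgbdd : L.IsBoundedUnder (· ≥ ·) g :=
    ⟨1, Filter.eventually_map.mpr (hmem.mono fun x hx => hg1 x hx)⟩
  have hfcob : L.IsCoboundedUnder (· ≥ ·) f :=
    Filter.IsBoundedUnder.isCoboundedUnder_ge
      ⟨1, Filter.eventually_map.mpr (hmem.mono fun x hx => hf1 x hx)⟩
  have hgcob : L.IsCoboundedUnder (· ≥ ·) g :=
    Filter.IsBoundedUnder.isCoboundedUnder_ge
      ⟨2, Filter.eventually_map.mpr (hmem.mono fun x hx =>
        le_trans (hgf x hx) (by linarith [hf1 x hx]))⟩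
  constructor
  · intro h
    set c := Filter.liminf f L with hc
    have hev : ∀ᶠ x in L, c / 2 < f x :=
      Filter.eventually_lt_of_lt_liminf (half_lt_self h) hfbdd
    have hev2 : ∀ᶠ x in L, c / 2 < f (2 * x) := htend.eventually hev
    have hev3 : ∀ᶠ x in L, 1 + c / 4 ≤ g x := by
      filter_upwards [hev2, hmem] with x h1 h2
      have := hg2 x h2
      linarith
    have := Filter.le_liminf_of_le hgcob hev3
    linarith [half_pos h]
  · intro h
    set c := Filter.liminf g L with hc
    have hev : ∀ᶠ x in L, (1 + c) / 2 < g x :=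
      Filter.eventually_lt_of_lt_liminf (by linarith) hgbdd
    have hev3 : ∀ᶠ x in L, (c - 1) / 2 ≤ f x := by
      filter_upwards [hev, hmem] with x h1 h2
      have := hgf x h2
      linarith
    have := Filter.le_liminf_of_le hfcob hev3
    linarith
end

section
/- Let φ be the Laplace exponent of a driftless subordinator with I(x) = ∫₀^x μ̄(y) dy. If liminf_{x→0} I(2x)/I(x) > 1, then limsup_{λ→∞} φ(2λ)/φ(λ) < 2. -/
open MeasureTheory Set Filter

set_option maxHeartbeats 1000000 in
theorem positive_increase_implies_doubling
    (q : ℝ) (hq : 0 ≤ q)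
    (mubar : ℝ → ℝ)
    (hnn : ∀ y : ℝ, 0 < y → 0 ≤ mubar y)
    (hmono : AntitoneOn mubar (Set.Ioi 0))
    (φ : ℝ → ℝ)
    (hφ : ∀ l : ℝ, 0 < l →
      φ l = q + l * ∫ t in Set.Ioi (0:ℝ), Real.exp (-(l * t)) * mubar t)
    (hintφ : ∀ l : ℝ, 0 < l →
      IntegrableOn (fun t => Real.exp (-(l * t)) * mubar t) (Set.Ioi 0))
    (I : ℝ → ℝ)
    (hI : ∀ x : ℝ, I x = ∫ y in (0:ℝ)..x, mubar y)
    (hIpos : ∀ x : ℝ, 0 < x → 0 < I x)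
    (hPI : 1 < Filter.liminf (fun x : ℝ => I (2 * x) / I x)
        (nhdsWithin 0 (Set.Ioi 0))) :
    Filter.limsup (fun l : ℝ => φ (2 * l) / φ l) atTop < 2 := by
  classical
  set L := Filter.liminf (fun x : ℝ => I (2 * x) / I x) (nhdsWithin 0 (Set.Ioi 0)) with hLdef
  have hIbdd : IsBoundedUnder (· ≥ ·) (nhdsWithin 0 (Set.Ioi 0))
      (fun x : ℝ => I (2 * x) / I x) := by
    refine ⟨0, ?_⟩
    rw [eventually_map]
    filter_upwards [self_mem_nhdsWithin] with x hx
    exact div_nonneg (le_of_lt (hIpos _ (mul_pos two_pos (mem_Ioi.1 hx)))) (le_of_lt (hIpos x hx))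
  have hδ : (0:ℝ) < (L - 1) / 2 := by linarith only [hPI]
  set δ := (L - 1) / 2 with hδdef
  have hev : ∀ᶠ x in nhdsWithin 0 (Set.Ioi 0), 1 + δ < I (2 * x) / I x :=
    eventually_lt_of_lt_liminf (by rw [← hLdef]; simp only [hδdef]; linarith only [hPI]) hIbdd
  obtain ⟨x₀, hx₀pos, hx₀⟩ : ∃ x₀ > (0:ℝ), ∀ x : ℝ, 0 < x → x < x₀ → 1 + δ < I (2 * x) / I x := by
    rcases mem_nhdsGT_iff_exists_Ioo_subset.1 hev with ⟨u, hu, hsub⟩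
    exact ⟨u, hu, fun x hx1 hx2 => hsub ⟨hx1, hx2⟩⟩
  -- constants
  have hexp1 : Real.exp (-1) < 1 := Real.exp_lt_one_iff.2 (by norm_num)
  set ε := (1 - Real.exp (-1)) / (Real.exp 2 / δ + 1) with hεdef
  have hCpos : (0:ℝ) < Real.exp 2 / δ + 1 := by positivity
  have hεpos : 0 < ε := by
    apply div_pos (by linarith only [hexp1]) hCpos
  have hε1 : ε < 1 := by
    rw [hεdef, div_lt_one hCpos]
    have h1 : 0 < Real.exp (-1) := Real.exp_pos _
    have h2 : 0 < Real.exp 2 / δ := by positivity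
    linarith only [h1, h2]
  set θ := 1 - ε with hθdef
  set A := max 1 (2 * θ) with hAdef
  have hA1 : (1:ℝ) ≤ A := le_max_left _ _
  have h2θA : 2 * θ ≤ A := le_max_right _ _
  have hA2 : A < 2 := max_lt one_lt_two (by simp only [hθdef]; linarith only [hεpos])
  -- main eventual bound
  have key : ∀ᶠ l in atTop, φ (2 * l) / φ l ≤ A ∧ 0 ≤ φ (2 * l) / φ l := by
    filter_upwards [eventually_gt_atTop (max 1 (1 / x₀))] with l hl
    have hl1 : 1 < l := lt_of_le_of_lt (le_max_left _ _) hl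
    have hlx : 1 / x₀ < l := lt_of_le_of_lt (le_max_right _ _) hl
    have hlpos : 0 < l := lt_trans one_pos hl1
    set a := 1 / l with hadef
    have hapos : 0 < a := by positivity
    have hla : l * a = 1 := by rw [hadef, mul_one_div, div_self hlpos.ne']
    have hax : a < x₀ := by
      rw [hadef, div_lt_iff₀ hlpos]
      rw [div_lt_iff₀ hx₀pos] at hlx
      linarith only [hlx]
    -- integrability
    have hg1 : IntegrableOn (fun t => Real.exp (-(l * t)) * mubar t) (Ioi (0:ℝ)) :=
      hintφ l hlpos
    have hg2 : IntegrableOn (fun t => Real.exp (-(2 * l * t)) * mubar t) (Ioi (0:ℝ)) :=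
      hintφ (2 * l) (by positivity)
    have hmu_int : ∀ b : ℝ, 0 < b → IntegrableOn mubar (Ioc 0 b) := by
      intro b hb
      have hgb : IntegrableOn (fun t => Real.exp (-(l * t)) * mubar t) (Ioc 0 b) :=
        hg1.mono_set Ioc_subset_Ioi_self
      have hbig : IntegrableOn
          (fun t => Real.exp (l * b) * (Real.exp (-(l * t)) * mubar t)) (Ioc 0 b) :=
        hgb.const_mul _
      have hmueq : mubar = fun t => Real.exp (l * t) * (Real.exp (-(l * t)) * mubar t) := by
        funext t
        rw [← mul_assoc, ← Real.exp_add]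
        simp
      have hmeas : AEStronglyMeasurable mubar (volume.restrict (Ioc 0 b)) := by
        rw [hmueq]
        exact ((Real.continuous_exp.comp (continuous_const.mul continuous_id)).aestronglyMeasurable).mul hgb.1
      refine hbig.mono' hmeas ?_
      filter_upwards [ae_restrict_mem measurableSet_Ioc] with t ht
      have hmt : 0 ≤ mubar t := hnn t ht.1
      rw [Real.norm_eq_abs, abs_of_nonneg hmt]
      calc mubar t = Real.exp (l * t) * (Real.exp (-(l * t)) * mubar t) := by
            rw [← mul_assoc, ← Real.exp_add]; simp
        _ ≤ Real.exp (l * b) * (Real.exp (-(l * t)) * mubar t) := by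
            apply mul_le_mul_of_nonneg_right
            · exact Real.exp_le_exp.2 (mul_le_mul_of_nonneg_left ht.2 hlpos.le)
            · exact mul_nonneg (Real.exp_pos _).le hmt
    -- I values
    have hIval : ∀ b : ℝ, 0 < b → I b = ∫ t in Ioc (0:ℝ) b, mubar t := by
      intro b hb
      rw [hI b, intervalIntegral.integral_of_le hb.le]
    have hIdiff : I (2 * a) - I a = ∫ t in Ioc a (2 * a), mubar t := by
      have h1 : IntervalIntegrable mubar volume 0 a :=
        (intervalIntegrable_iff_integrableOn_Ioc_of_le hapos.le).2 (hmu_int a hapos)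
      have h2 : IntervalIntegrable mubar volume a (2 * a) :=
        (intervalIntegrable_iff_integrableOn_Ioc_of_le (by linarith)).2
          ((hmu_int (2 * a) (by linarith)).mono_set (Ioc_subset_Ioc hapos.le le_rfl))
      rw [hI (2 * a), hI a, ← intervalIntegral.integral_add_adjacent_intervals h1 h2,
        intervalIntegral.integral_of_le (show a ≤ 2 * a by linarith)]
      ring
    set g := fun t : ℝ => Real.exp (-(l * t)) * mubar t with hgdef
    set g2 := fun t : ℝ => Real.exp (-(2 * l * t)) * mubar t with hg2def
    have hg_nonneg : ∀ t ∈ Ioi (0:ℝ), 0 ≤ g t :=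
      fun t ht => mul_nonneg (Real.exp_pos _).le (hnn t ht)
    set head := ∫ t in Ioc (0:ℝ) a, g t with hheaddef
    set tail := ∫ t in Ioi a, g t with htaildef
    have hsplit : (∫ t in Ioi (0:ℝ), g t) = head + tail := by
      rw [← setIntegral_union (Ioc_disjoint_Ioi le_rfl) measurableSet_Ioi
        (hg1.mono_set Ioc_subset_Ioi_self) (hg1.mono_set (Ioi_subset_Ioi hapos.le)),
        Ioc_union_Ioi_eq_Ioi hapos.le]
    have hIa : 0 < I a := hIpos a hapos
    have hhead_nonneg : 0 ≤ head :=
      setIntegral_nonneg measurableSet_Ioc (fun t ht => hg_nonneg t ht.1)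
    have hhead : head ≤ I a := by
      rw [hIval a hapos]
      apply setIntegral_mono_on (hg1.mono_set Ioc_subset_Ioi_self) (hmu_int a hapos)
        measurableSet_Ioc
      intro t ht
      have hmt := hnn t ht.1
      calc Real.exp (-(l * t)) * mubar t ≤ 1 * mubar t := by
            apply mul_le_mul_of_nonneg_right _ hmt
            rw [Real.exp_le_one_iff]
            have h7 := mul_pos hlpos ht.1
            linarith only [h7]
        _ = mubar t := one_mul _
    have hmid_sub : Ioc a (2 * a) ⊆ Ioi (0:ℝ) := fun t ht => lt_trans hapos ht.1
    have hmid_int : IntegrableOn g (Ioc a (2 * a)) := hg1.mono_set hmid_sub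
    have htail_ge_mid : (∫ t in Ioc a (2 * a), g t) ≤ tail := by
      apply setIntegral_mono_set (hg1.mono_set (Ioi_subset_Ioi hapos.le))
      · filter_upwards [ae_restrict_mem measurableSet_Ioi] with t ht
        exact hg_nonneg t (lt_trans hapos ht)
      · exact (Ioc_subset_Ioi_self).eventuallyLE
    have hmid : Real.exp (-2) * (I (2 * a) - I a) ≤ ∫ t in Ioc a (2 * a), g t := by
      rw [hIdiff, ← integral_const_mul]
      apply setIntegral_mono_on
        (((hmu_int (2 * a) (by linarith)).mono_set
          (Ioc_subset_Ioc hapos.le le_rfl)).const_mul _)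
        hmid_int measurableSet_Ioc
      intro t ht
      have hmt : 0 ≤ mubar t := hnn t (lt_trans hapos ht.1)
      apply mul_le_mul_of_nonneg_right _ hmt
      apply Real.exp_le_exp.2
      have h5 := mul_le_mul_of_nonneg_left ht.2 hlpos.le
      have h6 : l * (2 * a) = 2 := by rw [show l * (2 * a) = 2 * (l * a) by ring, hla, mul_one]
      linarith only [h5, h6]
    have hIgrow : δ * I a ≤ I (2 * a) - I a := by
      have h := hx₀ a hapos hax
      rw [lt_div_iff₀ hIa] at h
      have heq : (1 + δ) * I a = I a + δ * I a := by ring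
      linarith only [h, heq]
    have htail_lb : Real.exp (-2) * (δ * I a) ≤ tail :=
      le_trans (mul_le_mul_of_nonneg_left hIgrow (Real.exp_pos _).le)
        (le_trans hmid htail_ge_mid)
    have htailpos : 0 < tail :=
      lt_of_lt_of_le (by positivity) htail_lb
    -- difference of the two Laplace integrals
    have hdiff_eq : (∫ t in Ioi (0:ℝ), g t) - (∫ t in Ioi (0:ℝ), g2 t)
        = ∫ t in Ioi (0:ℝ), (g t - g2 t) := (integral_sub hg1 hg2).symm
    have hg2split : ∀ t : ℝ, g2 t = Real.exp (-(l * t)) * Real.exp (-(l * t)) * mubar t := by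
      intro t
      simp only [hg2def]
      rw [show -(2 * l * t) = -(l * t) + -(l * t) by ring, Real.exp_add]
    have hdiff_nonneg : ∀ᵐ t ∂(volume.restrict (Ioi (0:ℝ))), 0 ≤ g t - g2 t := by
      filter_upwards [ae_restrict_mem measurableSet_Ioi] with t ht
      have hmt : 0 ≤ mubar t := hnn t ht
      have hu1 : Real.exp (-(l * t)) ≤ 1 := by
        rw [Real.exp_le_one_iff]
        have h7 := mul_pos hlpos (mem_Ioi.1 ht)
        linarith only [h7]
      have hu0 : 0 < Real.exp (-(l * t)) := Real.exp_pos _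
      rw [hg2split t]
      simp only [hgdef]
      have hkey : 0 ≤ Real.exp (-(l * t)) * mubar t * (1 - Real.exp (-(l * t))) :=
        mul_nonneg (mul_nonneg hu0.le hmt) (sub_nonneg.2 hu1)
      have heq : Real.exp (-(l * t)) * mubar t
          - Real.exp (-(l * t)) * Real.exp (-(l * t)) * mubar t
          = Real.exp (-(l * t)) * mubar t * (1 - Real.exp (-(l * t))) := by ring
      linarith only [hkey, heq]
    have hdiff_ge : (1 - Real.exp (-1)) * tail ≤ ∫ t in Ioi (0:ℝ), (g t - g2 t) := by
      have hsub_int : IntegrableOn (fun t => g t - g2 t) (Ioi (0:ℝ)) := hg1.sub hg2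
      have step1 : (∫ t in Ioi a, (g t - g2 t)) ≤ ∫ t in Ioi (0:ℝ), (g t - g2 t) :=
        setIntegral_mono_set hsub_int hdiff_nonneg (Ioi_subset_Ioi hapos.le).eventuallyLE
      have step2 : (1 - Real.exp (-1)) * tail ≤ ∫ t in Ioi a, (g t - g2 t) := by
        rw [htaildef, ← integral_const_mul]
        apply setIntegral_mono_on
          ((hg1.mono_set (Ioi_subset_Ioi hapos.le)).const_mul _)
          (hsub_int.mono_set (Ioi_subset_Ioi hapos.le))
          measurableSet_Ioi
        intro t ht
        have htpos : 0 < t := lt_trans hapos ht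
        have hmt : 0 ≤ mubar t := hnn t htpos
        have hue : Real.exp (-(l * t)) ≤ Real.exp (-1) := by
          apply Real.exp_le_exp.2
          have h7 : a ≤ t := (mem_Ioi.1 ht).le
          have h8 := mul_le_mul_of_nonneg_left h7 hlpos.le
          linarith only [h8, hla]
        have hu0 : 0 < Real.exp (-(l * t)) := Real.exp_pos _
        rw [hg2split t]
        simp only [hgdef]
        have hkey : 0 ≤ Real.exp (-(l * t)) * mubar t * (Real.exp (-1) - Real.exp (-(l * t))) :=
          mul_nonneg (mul_nonneg hu0.le hmt) (sub_nonneg.2 hue)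
        have heq : (Real.exp (-(l * t)) * mubar t
            - Real.exp (-(l * t)) * Real.exp (-(l * t)) * mubar t)
            - (1 - Real.exp (-1)) * (Real.exp (-(l * t)) * mubar t)
            = Real.exp (-(l * t)) * mubar t * (Real.exp (-1) - Real.exp (-(l * t))) := by ring
        linarith only [hkey, heq]
      linarith only [step1, step2]
    set Jl := ∫ t in Ioi (0:ℝ), g t with hJldef
    set J2l := ∫ t in Ioi (0:ℝ), g2 t with hJ2ldef
    have hJl_nonneg : 0 ≤ Jl :=
      setIntegral_nonneg measurableSet_Ioi hg_nonneg
    have hJ2l_nonneg : 0 ≤ J2l :=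
      setIntegral_nonneg measurableSet_Ioi
        (fun t ht => mul_nonneg (Real.exp_pos _).le (hnn t ht))
    have hhead_tail : δ * head ≤ Real.exp 2 * tail := by
      have h2 : Real.exp 2 * Real.exp (-2) = 1 := by
        rw [← Real.exp_add]; norm_num
      have h3 := mul_le_mul_of_nonneg_left htail_lb (Real.exp_pos 2).le
      have h4 : δ * head ≤ δ * I a := mul_le_mul_of_nonneg_left hhead hδ.le
      have h5 : Real.exp 2 * (Real.exp (-2) * (δ * I a)) = δ * I a := by
        rw [← mul_assoc, h2, one_mul]
      linarith only [h3, h4, h5]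
    have hJl_le : Jl ≤ (Real.exp 2 / δ + 1) * tail := by
      rw [hsplit]
      have : head ≤ Real.exp 2 / δ * tail := by
        rw [div_mul_eq_mul_div, le_div_iff₀ hδ]
        linarith only [hhead_tail]
      linarith only [this]
    have hJ2l_le : J2l ≤ θ * Jl := by
      have hεC : ε * (Real.exp 2 / δ + 1) = 1 - Real.exp (-1) := by
        rw [hεdef]; field_simp
      have h1 : ε * Jl ≤ ε * ((Real.exp 2 / δ + 1) * tail) :=
        mul_le_mul_of_nonneg_left hJl_le hεpos.le
      have h2 : ε * ((Real.exp 2 / δ + 1) * tail) = (1 - Real.exp (-1)) * tail := by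
        rw [← mul_assoc, hεC]
      have h3 : ε * Jl ≤ Jl - J2l := by
        rw [hdiff_eq]
        calc ε * Jl ≤ (1 - Real.exp (-1)) * tail := by rw [← h2]; exact h1
          _ ≤ _ := hdiff_ge
      simp only [hθdef]
      linarith only [h3]
    have htail_le_J : tail ≤ Jl := by
      rw [hsplit]; linarith only [hhead_nonneg]
    have hφl : φ l = q + l * Jl := hφ l hlpos
    have hφ2l : φ (2 * l) = q + 2 * l * J2l := hφ (2 * l) (by positivity)
    have hφlpos : 0 < φ l := by
      rw [hφl]
      have h8 : 0 < l * Jl := mul_pos hlpos (lt_of_lt_of_le htailpos htail_le_J)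
      linarith only [h8, hq]
    have hφ2l_le : φ (2 * l) ≤ A * φ l := by
      rw [hφl, hφ2l]
      have h1 : 2 * l * J2l ≤ 2 * l * (θ * Jl) :=
        mul_le_mul_of_nonneg_left hJ2l_le (by positivity)
      have h2 : 2 * l * (θ * Jl) = (2 * θ) * (l * Jl) := by ring
      have h3 : (2 * θ) * (l * Jl) ≤ A * (l * Jl) :=
        mul_le_mul_of_nonneg_right h2θA (mul_nonneg hlpos.le hJl_nonneg)
      have h4 : q ≤ A * q := by
        have h6 : 0 ≤ (A - 1) * q := mul_nonneg (sub_nonneg.2 hA1) hq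
        have h7 : (A - 1) * q = A * q - q := by ring
        linarith only [h6, h7]
      have h5 : A * (q + l * Jl) = A * q + A * (l * Jl) := by ring
      linarith only [h1, h2, h3, h4, h5]
    constructor
    · rw [div_le_iff₀ hφlpos]; linarith only [hφ2l_le]
    · apply div_nonneg _ hφlpos.le
      rw [hφ2l]
      have h9 : 0 ≤ 2 * l * J2l := mul_nonneg (by positivity) hJ2l_nonneg
      linarith only [h9, hq]
  -- conclude
  have h1 : ∀ᶠ l in atTop, φ (2 * l) / φ l ≤ A := key.mono fun l h => h.1
  have h0 : ∀ᶠ l in atTop, 0 ≤ φ (2 * l) / φ l := key.mono fun l h => h.2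
  have hcb : IsCoboundedUnder (· ≤ ·) atTop (fun l : ℝ => φ (2 * l) / φ l) := by
    apply IsBoundedUnder.isCoboundedUnder_le
    exact ⟨0, by rw [eventually_map]; exact h0⟩
  have hle : Filter.limsup (fun l : ℝ => φ (2 * l) / φ l) atTop ≤ A :=
    limsup_le_of_le hcb h1
  exact lt_of_le_of_lt hle hA2
end

section
/- Let φ be the Laplace exponent of a killed compound Poisson subordinator with B = φ(∞) = q + μ̄(0) ∈ (0,∞). Then lim_{x→∞} x φ'(x) = 0, and consequently, with φ⋆(x) = x/φ(x) and its inverse ϕ⋆, one has ϕ⋆(x) ∼ Bx and ϕ⋆'(x) → B as x → ∞. -/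
/-!
Since `μ` is finite, dominated convergence gives `φ x → q + μ̄(0) = B` and
`x φ'(x) = ∫ (x y) e^{-x y} μ(dy) → 0`, the integrand being bounded by `e⁻¹`. Concavity of
`u ↦ 1 - e^{-u}` makes `t ↦ t / φ t` monotone, so its right inverse `ψ` tends to infinity. Then
`ψ x / (B x) = φ (ψ x) / B → 1`, and by the inverse function rule
`ψ' x = φ(ψ x)² / (φ(ψ x) - ψ x φ'(ψ x)) → B² / B = B`.
-/

open MeasureTheory Set Filter Topology Real

lemma mul_one_sub_exp_neg_le {l : ℝ} (hl₀ : 0 ≤ l) (hl₁ : l ≤ 1) (u : ℝ) :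
    l * (1 - exp (-u)) ≤ 1 - exp (-(l * u)) := by
  have h := convexOn_exp.2 (mem_univ 0) (mem_univ (-u)) (sub_nonneg.2 hl₁) hl₀ (by ring)
  simp only [smul_eq_mul, mul_zero, zero_add, exp_zero, mul_one, mul_neg] at h
  linarith

lemma abs_one_sub_exp_neg_le_one {t : ℝ} (ht : 0 ≤ t) : |1 - exp (-t)| ≤ 1 := by
  have h₁ : exp (-t) ≤ 1 := exp_le_one_iff.2 (neg_nonpos.2 ht)
  rw [abs_le]
  constructor <;> linarith [exp_pos (-t)]

section FiniteLevyMeasure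

variable {ν : Measure ℝ} [IsFiniteMeasure ν]

lemma integrable_one_sub_exp_neg_mul (hν : ∀ᵐ y ∂ν, 0 ≤ y) {x : ℝ} (hx : 0 ≤ x) :
    Integrable (fun y => 1 - exp (-(x * y))) ν :=
  .of_bound (by fun_prop) 1 <| by
    filter_upwards [hν] with y hy using abs_one_sub_exp_neg_le_one (mul_nonneg hx hy)

lemma mul_integral_one_sub_exp_neg_mul_le (hν : ∀ᵐ y ∂ν, 0 ≤ y) {s t : ℝ} (hs : 0 < s)
    (hst : s ≤ t) :
    s * ∫ y, (1 - exp (-(t * y))) ∂ν ≤ t * ∫ y, (1 - exp (-(s * y))) ∂ν := by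
  have ht : 0 < t := hs.trans_le hst
  rw [← integral_const_mul, ← integral_const_mul]
  refine integral_mono ((integrable_one_sub_exp_neg_mul hν ht.le).const_mul s)
    ((integrable_one_sub_exp_neg_mul hν hs.le).const_mul t) fun y => ?_
  have h := mul_one_sub_exp_neg_le (div_nonneg hs.le ht.le) ((div_le_one ht).2 hst) (t * y)
  rw [show s / t * (t * y) = s * y by field_simp] at h
  calc s * (1 - exp (-(t * y))) = t * (s / t * (1 - exp (-(t * y)))) := by field_simp
    _ ≤ t * (1 - exp (-(s * y))) := mul_le_mul_of_nonneg_left h ht.le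

lemma tendsto_integral_one_sub_exp_neg_mul_atTop (hν : ∀ᵐ y ∂ν, 0 < y) :
    Tendsto (fun x => ∫ y, (1 - exp (-(x * y))) ∂ν) atTop (𝓝 (ν.real univ)) := by
  have hlim := tendsto_integral_filter_of_dominated_convergence (μ := ν) (l := atTop)
    (F := fun x y => 1 - exp (-(x * y))) (f := fun _ => 1) (fun _ => 1)
    (.of_forall fun _ => by fun_prop)
    (by
      filter_upwards [eventually_ge_atTop 0] with x hx
      filter_upwards [hν] with y hy using abs_one_sub_exp_neg_le_one (by positivity))
    (integrable_const 1)
    (by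
      filter_upwards [hν] with y hy
      simpa using (tendsto_exp_atBot.comp
        (tendsto_neg_atTop_atBot.comp (tendsto_id.atTop_mul_const hy))).const_sub 1)
  simpa using hlim

lemma tendsto_mul_integral_mul_exp_neg_mul_atTop (hν : ∀ᵐ y ∂ν, 0 ≤ y) :
    Tendsto (fun x => x * ∫ y, y * exp (-(x * y)) ∂ν) atTop (𝓝 0) := by
  have hlim := tendsto_integral_filter_of_dominated_convergence (μ := ν) (l := atTop)
    (F := fun x y => x * y * exp (-(x * y))) (f := fun _ => 0) (fun _ => exp (-1))
    (.of_forall fun _ => by fun_prop)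
    (by
      filter_upwards [eventually_ge_atTop 0] with x hx
      filter_upwards [hν] with y hy
      rw [norm_of_nonneg (by positivity)]
      exact mul_exp_neg_le_exp_neg_one (x * y))
    (integrable_const _)
    (by
      filter_upwards [hν] with y hy
      rcases hy.eq_or_lt with rfl | hy
      · simp
      · simpa [Function.comp_def, mul_assoc] using
          (tendsto_pow_mul_exp_neg_atTop_nhds_zero 1).comp (tendsto_id.atTop_mul_const hy))
  simpa only [integral_zero, ← integral_const_mul, mul_assoc] using hlim

end FiniteLevyMeasure

section RightInverse

variable {φ ψ : ℝ → ℝ} {B : ℝ}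

lemma tendsto_atTop_of_monotoneOn_comp_eq {g : ℝ → ℝ} (hg : MonotoneOn g (Ioi 0))
    (hψ : ∀ᶠ x in atTop, 0 < ψ x ∧ g (ψ x) = x) : Tendsto ψ atTop atTop := by
  refine tendsto_atTop.2 fun b => ?_
  have hC : (0 : ℝ) < max b 1 := one_pos.trans_le (le_max_right _ _)
  filter_upwards [hψ, eventually_gt_atTop (g (max b 1))] with x ⟨hpos, hx⟩ hgx
  by_contra! hlt
  have := hg hpos hC (hlt.le.trans (le_max_left _ _))
  linarith

lemma tendsto_div_mul_of_div_comp_eq (hφ : Tendsto φ atTop (𝓝 B)) (hB : B ≠ 0)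
    (hψ : Tendsto ψ atTop atTop) (hinv : ∀ᶠ x in atTop, ψ x / φ (ψ x) = x) :
    Tendsto (fun x => ψ x / (B * x)) atTop (𝓝 1) := by
  have hφψ := hφ.comp hψ
  have heq : ∀ᶠ x in atTop, φ (ψ x) / B = ψ x / (B * x) := by
    filter_upwards [hinv, hψ.eventually_gt_atTop 0, hψ.eventually (hφ.eventually_ne hB)]
      with x hx hψx hφx
    calc φ (ψ x) / B = ψ x / (B * (ψ x / φ (ψ x))) := by field_simp
      _ = ψ x / (B * x) := by rw [hx]
  simpa [hB] using (hφψ.div_const B).congr' heq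

lemma tendsto_deriv_of_div_comp_eq (hφ : Tendsto φ atTop (𝓝 B)) (hB : B ≠ 0)
    (hφ' : Tendsto (fun t => t * deriv φ t) atTop (𝓝 0))
    (hφdiff : ∀ᶠ t in atTop, DifferentiableAt ℝ φ t) (hψ : Tendsto ψ atTop atTop)
    (hinv : ∀ᶠ x in atTop, ψ x / φ (ψ x) = x)
    (hψdiff : ∀ᶠ x in atTop, DifferentiableAt ℝ ψ x) :
    Tendsto (deriv ψ) atTop (𝓝 B) := by
  set F' := fun t => (φ t - t * deriv φ t) / φ t ^ 2
  have hF' : Tendsto F' atTop (𝓝 B⁻¹) := by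
    have h := (hφ.sub hφ').div (hφ.pow 2) (pow_ne_zero 2 hB)
    rwa [sub_zero, sq, div_mul_cancel_left₀ hB] at h
  have hF'ψ : Tendsto (F' ∘ ψ) atTop (𝓝 B⁻¹) := hF'.comp hψ
  have hderivF : ∀ᶠ t in atTop, HasDerivAt (fun t => t / φ t) (F' t) t := by
    filter_upwards [hφdiff, hφ.eventually_ne hB] with t hd hne
    simpa only [one_mul] using (hasDerivAt_id' t).fun_div hd.hasDerivAt hne
  obtain ⟨a, ha⟩ := eventually_atTop.1 hinv
  have hloc : ∀ᶠ x in atTop, ∀ᶠ y in 𝓝 x, ψ y / φ (ψ y) = y := by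
    filter_upwards [eventually_gt_atTop a] with x hx
    filter_upwards [Ioi_mem_nhds hx] with y hy using ha y hy.le
  have heq : ∀ᶠ x in atTop, ((F' ∘ ψ) x)⁻¹ = deriv ψ x := by
    filter_upwards [hψdiff, hψ.eventually hderivF, hloc,
      hF'ψ.eventually_ne (inv_ne_zero hB)] with x hd hF hl hne
    exact ((hF.of_local_left_inverse hd.continuousAt hne hl).deriv).symm
  simpa using (hF'ψ.inv₀ (inv_ne_zero hB)).congr' heq

end RightInverse

theorem compound_poisson_inverse_asymptotics
    (q : ℝ) (hq : 0 ≤ q)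
    (μ : Measure ℝ)
    (hfin : μ (Set.Ioi (0:ℝ)) < ⊤)
    (B : ℝ) (hB : B = q + (μ (Set.Ioi (0:ℝ))).toReal) (hBpos : 0 < B)
    (φ : ℝ → ℝ)
    (hφ : ∀ x : ℝ, 0 < x →
      φ x = q + ∫ y in Set.Ioi (0:ℝ), (1 - Real.exp (-(x * y))) ∂μ)
    (hderiv : ∀ x : ℝ, 0 < x →
      HasDerivAt φ (∫ y in Set.Ioi (0:ℝ), y * Real.exp (-(x * y)) ∂μ) x)
    (hpos : ∀ x : ℝ, 0 < x → 0 < φ x)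
    (ψ : ℝ → ℝ)
    (hinv : ∀ᶠ x in atTop, 0 < ψ x ∧ ψ x / φ (ψ x) = x)
    (hψdiff : ∀ᶠ x in atTop, DifferentiableAt ℝ ψ x) :
    Tendsto (fun x : ℝ => x * deriv φ x) atTop (nhds 0)
      ∧ Tendsto (fun x : ℝ => ψ x / (B * x)) atTop (nhds 1)
      ∧ Tendsto (fun x : ℝ => deriv ψ x) atTop (nhds B) := by
  have : IsFiniteMeasure (μ.restrict (Ioi 0)) := isFiniteMeasure_restrict.2 hfin.ne
  have hν : ∀ᵐ y ∂μ.restrict (Ioi 0), 0 < y := ae_restrict_mem measurableSet_Ioi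
  have hν₀ : ∀ᵐ y ∂μ.restrict (Ioi 0), 0 ≤ y := hν.mono fun _ => le_of_lt
  have hxφ' : Tendsto (fun x => x * deriv φ x) atTop (𝓝 0) :=
    (tendsto_mul_integral_mul_exp_neg_mul_atTop hν₀).congr' <| by
      filter_upwards [eventually_gt_atTop 0] with x hx
      rw [(hderiv x hx).deriv]
  have hφB : Tendsto φ atTop (𝓝 B) := by
    rw [hB, ← measureReal_def, ← measureReal_restrict_apply_univ]
    refine ((tendsto_integral_one_sub_exp_neg_mul_atTop hν).const_add q).congr' ?_
    filter_upwards [eventually_gt_atTop 0] with x hx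
    exact (hφ x hx).symm
  have hmono : MonotoneOn (fun t => t / φ t) (Ioi 0) := by
    intro s hs t ht hst
    have h := mul_integral_one_sub_exp_neg_mul_le hν₀ hs hst
    rw [div_le_div_iff₀ (hpos s hs) (hpos t ht), hφ s hs, hφ t ht]
    nlinarith [mul_le_mul_of_nonneg_right hst hq]
  have hψ := tendsto_atTop_of_monotoneOn_comp_eq hmono hinv
  have hinv' := hinv.mono fun _ => And.right
  refine ⟨hxφ', tendsto_div_mul_of_div_comp_eq hφB hBpos.ne' hψ hinv', ?_⟩
  refine tendsto_deriv_of_div_comp_eq hφB hBpos.ne' hxφ' ?_ hψ hinv' hψdiff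
  filter_upwards [eventually_gt_atTop 0] with t ht
  exact (hderiv t ht).differentiableAt
end

section
/- Let φ be a Bernstein function with φ⋆(z) = z/φ(z), and let x > 0 be such that ϕ⋆(x) (the inverse of φ⋆ at x) is defined. Define g_x(w) := (φ(ϕ⋆(x) + iw) − φ(ϕ⋆(x)))/φ(ϕ⋆(x)) for w ∈ ℝ. Then Re(g_x(w)) ≥ 0, Re(g_x(w)) ≤ 4 w²/ϕ⋆(x)², and |Im(g_x(w))| ≤ |w|/ϕ⋆(x). -/
open MeasureTheory Set Filter

private lemma sq_le_eight_mul {u : ℝ} (hu : 0 ≤ u) :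
    u ^ 2 ≤ 8 * (Real.exp u - 1) := by
  have h := Real.add_one_le_exp (u / 2)
  have he : Real.exp u = Real.exp (u / 2) * Real.exp (u / 2) := by
    rw [← Real.exp_add]; ring_nf
  nlinarith [Real.exp_pos (u / 2)]

set_option maxHeartbeats 1600000 in
theorem gx_bounds
    (q : ℝ) (hq : 0 ≤ q)
    (μ : Measure ℝ)
    (hμ : ∫⁻ y in Set.Ioi (0:ℝ), ENNReal.ofReal (min y 1) ∂μ < ⊤)
    (φ : ℂ → ℂ)
    (hφ : ∀ z : ℂ, 0 < z.re →
      φ z = (q : ℂ)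
        + ∫ y in Set.Ioi (0:ℝ), (1 - Complex.exp (-(z * (y : ℂ)))) ∂μ)
    (hint : ∀ z : ℂ, 0 < z.re →
      IntegrableOn (fun y : ℝ => 1 - Complex.exp (-(z * (y : ℂ)))) (Set.Ioi 0) μ)
    (x a : ℝ) (ha : 0 < a)
    (hax : a / (φ (a : ℂ)).re = x)
    (g : ℝ → ℂ)
    (hg : ∀ w : ℝ,
      g w = (φ ((a : ℂ) + (w : ℂ) * Complex.I) - φ (a : ℂ)) / φ (a : ℂ)) :
    ∀ w : ℝ,
      0 ≤ (g w).re ∧ (g w).re ≤ 4 * w ^ 2 / a ^ 2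
        ∧ |(g w).im| ≤ |w| / a := by
  intro w
  have haC : (0:ℝ) < ((a:ℂ)).re := by simpa using ha
  have hwC : (0:ℝ) < (((a:ℂ) + (w:ℂ) * Complex.I)).re := by simpa using ha
  set fR : ℝ → ℝ := fun y => 1 - Real.exp (-(a * y)) with hfRdef
  have hofr : ∀ y : ℝ,
      (1 - Complex.exp (-((a:ℂ) * (y:ℂ)))) = ((fR y : ℝ) : ℂ) := by
    intro y
    rw [hfRdef, Complex.ofReal_sub, Complex.ofReal_exp, Complex.ofReal_one]
    push_cast; ring_nf
  have hfRint : IntegrableOn fR (Ioi 0) μ := by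
    have h := (hint _ haC).re
    refine h.congr (Filter.Eventually.of_forall fun y => ?_)
    simp only [hofr y, RCLike.re_to_complex, Complex.ofReal_re]
  have hφaP : φ (a : ℂ) = ((q + ∫ y in Ioi 0, fR y ∂μ : ℝ) : ℂ) := by
    have hre := integral_re (μ := μ.restrict (Ioi 0)) (hint _ haC)
    have him := integral_im (μ := μ.restrict (Ioi 0)) (hint _ haC)
    simp only [RCLike.re_to_complex, RCLike.im_to_complex] at hre him
    rw [hφ _ haC]
    apply Complex.ext
    · simp only [Complex.add_re, Complex.ofReal_re]
      rw [← hre]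
      congr 1
      refine integral_congr_ae (Filter.Eventually.of_forall fun y => ?_)
      simp only [hofr y, Complex.ofReal_re]
    · simp only [Complex.add_im, Complex.ofReal_im]
      rw [← him]
      have hz : ∀ y : ℝ, (1 - Complex.exp (-((a:ℂ) * (y:ℂ)))).im = 0 := by
        intro y; rw [hofr y]; simp
      rw [integral_congr_ae (Filter.Eventually.of_forall fun y => hz y)]
      simp
  set P : ℝ := q + ∫ y in Ioi 0, fR y ∂μ with hPdef
  have hfRnn : ∀ y ∈ Ioi (0:ℝ), 0 ≤ fR y := by
    intro y hy
    have hy' : (0:ℝ) < y := hy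
    have h1 : Real.exp (-(a * y)) ≤ 1 := by
      rw [Real.exp_le_one_iff]
      nlinarith
    show (0:ℝ) ≤ 1 - Real.exp (-(a * y))
    linarith
  have hPnn : 0 ≤ P :=
    add_nonneg hq (setIntegral_nonneg measurableSet_Ioi hfRnn)
  by_cases hP0 : P = 0
  · rw [hg w, hφaP, hP0]
    simp
    constructor
    · positivity
    · positivity
  · have hPpos : 0 < P := lt_of_le_of_ne hPnn (Ne.symm hP0)
    -- the difference integrand
    set D : ℝ → ℂ := fun y =>
      (1 - Complex.exp (-(((a:ℂ) + (w:ℂ) * Complex.I) * (y:ℂ))))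
        - (1 - Complex.exp (-((a:ℂ) * (y:ℂ)))) with hDdef
    have hDint : IntegrableOn D (Ioi 0) μ := (hint _ hwC).sub (hint _ haC)
    have hN : φ ((a:ℂ) + (w:ℂ) * Complex.I) - φ (a:ℂ)
        = ∫ y in Ioi 0, D y ∂μ := by
      rw [hφ _ hwC, hφ _ haC, integral_sub (hint _ hwC) (hint _ haC)]
      ring
    set FRe : ℝ → ℝ := fun y => Real.exp (-(a * y)) * (1 - Real.cos (w * y))
      with hFRe
    set FIm : ℝ → ℝ := fun y => Real.exp (-(a * y)) * Real.sin (w * y)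
      with hFIm
    have hDre : ∀ y : ℝ, (D y).re = FRe y := by
      intro y
      simp [hDdef, hFRe, Complex.exp_re, Complex.add_re, Complex.add_im,
        Complex.mul_re, Complex.mul_im]
      try ring
    have hDim : ∀ y : ℝ, (D y).im = FIm y := by
      intro y
      simp [hDdef, hFIm, Complex.exp_im, Complex.add_re, Complex.add_im,
        Complex.mul_re, Complex.mul_im]
      try ring
    have hReint : IntegrableOn FRe (Ioi 0) μ :=
      hDint.re.congr (Filter.Eventually.of_forall fun y => by
        simpa using hDre y)
    have hImint : IntegrableOn FIm (Ioi 0) μ :=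
      hDint.im.congr (Filter.Eventually.of_forall fun y => by
        simpa using hDim y)
    have hIre : (∫ y in Ioi 0, D y ∂μ).re = ∫ y in Ioi 0, FRe y ∂μ := by
      have h := integral_re (μ := μ.restrict (Ioi 0)) hDint
      simp only [RCLike.re_to_complex] at h
      rw [← h]
      exact integral_congr_ae (Filter.Eventually.of_forall fun y => hDre y)
    have hIim : (∫ y in Ioi 0, D y ∂μ).im = ∫ y in Ioi 0, FIm y ∂μ := by
      have h := integral_im (μ := μ.restrict (Ioi 0)) hDint
      simp only [RCLike.im_to_complex] at h
      rw [← h]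
      exact integral_congr_ae (Filter.Eventually.of_forall fun y => hDim y)
    have hgw : g w = (∫ y in Ioi 0, D y ∂μ) / ((P : ℝ) : ℂ) := by
      rw [hg w, hN, hφaP]
    have hgre : (g w).re = (∫ y in Ioi 0, FRe y ∂μ) / P := by
      rw [hgw, Complex.div_ofReal_re, hIre]
    have hgim : (g w).im = (∫ y in Ioi 0, FIm y ∂μ) / P := by
      rw [hgw, Complex.div_ofReal_im, hIim]
    -- nonnegativity of FRe
    have hFRenn : ∀ y ∈ Ioi (0:ℝ), 0 ≤ FRe y := by
      intro y _
      have := Real.cos_le_one (w * y)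
      have := Real.exp_pos (-(a * y))
      simp only [hFRe]
      nlinarith
    have hReNN : 0 ≤ ∫ y in Ioi 0, FRe y ∂μ :=
      setIntegral_nonneg measurableSet_Ioi hFRenn
    -- pointwise bound for FRe
    have hkeyRe : ∀ y ∈ Ioi (0:ℝ), FRe y ≤ (4 * w ^ 2 / a ^ 2) * fR y := by
      intro y hy
      have hy' : (0:ℝ) < y := hy
      have hE := Real.exp_pos (-(a * y))
      have hmul : Real.exp (-(a * y)) * Real.exp (a * y) = 1 := by
        rw [← Real.exp_add]; simp
      have hc : 1 - Real.cos (w * y) ≤ (w * y) ^ 2 / 2 := by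
        nlinarith [Real.one_sub_sq_div_two_le_cos (x := w * y)]
      have haux := sq_le_eight_mul (le_of_lt (mul_pos ha hy'))
      rw [div_mul_eq_mul_div, le_div_iff₀ (by positivity)]
      show Real.exp (-(a * y)) * (1 - Real.cos (w * y)) * a ^ 2
        ≤ 4 * w ^ 2 * (1 - Real.exp (-(a * y)))
      have h3 : (a * y) ^ 2 * Real.exp (-(a * y))
          ≤ 8 * (1 - Real.exp (-(a * y))) := by
        nlinarith [mul_le_mul_of_nonneg_right haux hE.le, hmul]
      nlinarith [sq_nonneg w, sq_nonneg a, hE.le,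
        mul_le_mul_of_nonneg_left hc (mul_nonneg hE.le (sq_nonneg a)),
        mul_le_mul_of_nonneg_left h3 (sq_nonneg w)]
    have hReBound : (∫ y in Ioi 0, FRe y ∂μ)
        ≤ (4 * w ^ 2 / a ^ 2) * P := by
      have h1 : (∫ y in Ioi 0, FRe y ∂μ)
          ≤ ∫ y in Ioi 0, (4 * w ^ 2 / a ^ 2) * fR y ∂μ :=
        setIntegral_mono_on hReint (hfRint.const_mul _) measurableSet_Ioi hkeyRe
      have h2 : ∫ y in Ioi 0, (4 * w ^ 2 / a ^ 2) * fR y ∂μ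
          = (4 * w ^ 2 / a ^ 2) * ∫ y in Ioi 0, fR y ∂μ :=
        integral_const_mul _ _
      have hc : (0:ℝ) ≤ 4 * w ^ 2 / a ^ 2 := by positivity
      have h3 : (4 * w ^ 2 / a ^ 2) * ∫ y in Ioi 0, fR y ∂μ
          ≤ (4 * w ^ 2 / a ^ 2) * P := by
        rw [hPdef, mul_add]
        linarith [mul_nonneg hc hq]
      linarith [h1, le_of_eq h2, ge_of_eq h2, h3]
    -- pointwise bound for |FIm|
    have hkeyIm : ∀ y ∈ Ioi (0:ℝ), |FIm y| ≤ (|w| / a) * fR y := by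
      intro y hy
      have hy' : (0:ℝ) < y := hy
      have hE := Real.exp_pos (-(a * y))
      have hmul : Real.exp (-(a * y)) * Real.exp (a * y) = 1 := by
        rw [← Real.exp_add]; simp
      have hs : |Real.sin (w * y)| ≤ |w| * y := by
        have := Real.abs_sin_le_abs (x := w * y)
        rwa [abs_mul, abs_of_pos hy'] at this
      have hexp := Real.add_one_le_exp (a * y)
      simp only [hFIm, hfRdef]
      rw [abs_mul, abs_of_pos hE, div_mul_eq_mul_div, le_div_iff₀ ha]
      have p1 : a * y * Real.exp (-(a * y)) ≤ 1 - Real.exp (-(a * y)) := by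
        nlinarith [mul_le_mul_of_nonneg_right
          (by linarith : a * y ≤ Real.exp (a * y) - 1) hE.le, hmul]
      nlinarith [mul_le_mul_of_nonneg_left hs (mul_nonneg hE.le ha.le),
        mul_le_mul_of_nonneg_left p1 (abs_nonneg w)]
    have hImBound : |∫ y in Ioi 0, FIm y ∂μ| ≤ (|w| / a) * P := by
      have h0 : |∫ y in Ioi 0, FIm y ∂μ| ≤ ∫ y in Ioi 0, |FIm y| ∂μ := by
        simpa [Real.norm_eq_abs] using
          norm_integral_le_integral_norm (μ := μ.restrict (Ioi 0)) FIm
      have h1 : ∫ y in Ioi 0, |FIm y| ∂μ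
          ≤ ∫ y in Ioi 0, (|w| / a) * fR y ∂μ :=
        setIntegral_mono_on hImint.abs (hfRint.const_mul _)
          measurableSet_Ioi hkeyIm
      have h2 : ∫ y in Ioi 0, (|w| / a) * fR y ∂μ
          = (|w| / a) * ∫ y in Ioi 0, fR y ∂μ :=
        integral_const_mul _ _
      have hc : (0:ℝ) ≤ |w| / a := by positivity
      have h3 : (|w| / a) * ∫ y in Ioi 0, fR y ∂μ ≤ (|w| / a) * P := by
        rw [hPdef, mul_add]
        linarith [mul_nonneg hc hq]
      linarith [h0, h1, le_of_eq h2, h3]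
    refine ⟨?_, ?_, ?_⟩
    · rw [hgre]; exact div_nonneg hReNN hPnn
    · rw [hgre, div_le_iff₀ hPpos]
      linarith [hReBound]
    · rw [hgim, abs_div, abs_of_pos hPpos, div_le_iff₀ hPpos]
      calc |∫ y in Ioi 0, FIm y ∂μ| ≤ (|w| / a) * P := hImBound
        _ = |w| / a * P := rfl
end

section
/- Let φ be a driftless Bernstein function, and write z = a(1 + it) with a > 0, t > 0. With φ̄⋆(z) := qz + |z|² ∫₀^∞ e^{iaty} e^{−ay} μ̄(y) dy, one has arg φ⋆(z) = arg φ̄⋆(z) and Im(φ̄⋆(z)) ≥ 0. In particular, arg(z/φ(z)) ≥ 0 for all z with Re(z) > 0, Im(z) > 0. -/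
/-!
Since `φ z = q + z ∫₀^∞ e^{-zy} μ̄(y) dy` with `q` and `μ̄` real, the integrand of `φ̄⋆(z)` is
the complex conjugate of that of `φ(z)`, whence `φ̄⋆(z) = z · conj (φ z) = |φ z|² · z / φ z`
and both sides have the same argument. The imaginary part of `φ̄⋆(z)` is `q a t` plus `|z|²`
times `∫₀^∞ sin (a t y) e^{-ay} μ̄(y) dy`, and this integral is nonnegative because the weight
`e^{-ay} μ̄(y)` is non-increasing: on each period, the positive half-wave of the sine meets
larger values of the weight than the negative one.
-/

open MeasureTheory Set Filter

section SineIntegral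

open Real

variable {c h : ℝ} {g : ℝ → ℝ}

lemma intervalIntegral_sin_mul_antitone_period_nonneg (hc : 0 < c) (hch : c * h = π)
    (hg : AntitoneOn g (Ioi 0)) (n : ℕ)
    (hint : IntervalIntegrable (fun y => sin (c * y) * g y) volume (2 * n * h) (2 * (n + 1) * h)) :
    0 ≤ ∫ y in (2 * n * h)..(2 * (n + 1) * h), sin (c * y) * g y := by
  have hh : 0 < h := pos_of_mul_pos_right (hch ▸ pi_pos) hc.le
  set f : ℝ → ℝ := fun y => sin (c * y) * g y
  set a := 2 * n * h
  have ha : 0 ≤ a := by positivity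
  rw [show 2 * (n + 1) * h = a + h + h by ring] at hint ⊢
  have hint₁ : IntervalIntegrable f volume a (a + h) :=
    hint.mono_set (uIcc_subset_uIcc_left (mem_uIcc_of_le (by linarith) (by linarith)))
  have hint₂ : IntervalIntegrable f volume (a + h) (a + h + h) :=
    hint.mono_set (uIcc_subset_uIcc_right (mem_uIcc_of_le (by linarith) (by linarith)))
  have hshift : ∀ u, f (u + h) = -(sin (c * u) * g (u + h)) := fun u => by
    simp only [f, mul_add, hch, sin_add_pi, neg_mul]
  have hint₃ : IntervalIntegrable (fun u => sin (c * u) * g (u + h)) volume a (a + h) := by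
    convert (hint₂.comp_add_right h).neg using 1
    · ext u; simp [hshift]
    all_goals ring
  have hfold : ∫ y in a..(a + h + h), f y
      = ∫ u in a..(a + h), (f u - sin (c * u) * g (u + h)) := by
    rw [← intervalIntegral.integral_add_adjacent_intervals hint₁ hint₂,
      intervalIntegral.integral_sub hint₁ hint₃, ← intervalIntegral.integral_comp_add_right]
    simp only [hshift, intervalIntegral.integral_neg, sub_eq_add_neg]
  rw [hfold, intervalIntegral.integral_of_le (by linarith)]
  refine setIntegral_nonneg measurableSet_Ioc fun u hu => ?_
  have hsin : 0 ≤ sin (c * u) := by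
    have hca : c * a = n * (2 * π) := by rw [← hch]; ring
    rw [← sin_sub_nat_mul_two_pi]
    apply sin_nonneg_of_nonneg_of_le_pi <;> nlinarith [hu.1, hu.2]
  have hgu : g (u + h) ≤ g u := hg (ha.trans_lt hu.1) (by simp; linarith [hu.1]) (by linarith)
  simpa [f, ← mul_sub] using mul_nonneg hsin (sub_nonneg.2 hgu)

theorem integral_Ioi_sin_mul_antitone_nonneg (hc : 0 < c) (hg : AntitoneOn g (Ioi 0))
    (hint : IntegrableOn (fun y => sin (c * y) * g y) (Ioi 0)) :
    0 ≤ ∫ y in Ioi 0, sin (c * y) * g y := by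
  have hch : c * (π / c) = π := mul_div_cancel₀ π hc.ne'
  have hh : 0 < π / c := div_pos pi_pos hc
  have hint' : ∀ x y : ℝ, 0 ≤ x → 0 ≤ y →
      IntervalIntegrable (fun y => sin (c * y) * g y) volume x y := fun x y hx hy =>
    intervalIntegrable_iff.2 (hint.mono_set fun u hu => (le_min hx hy).trans_lt hu.1)
  have hperiods : ∀ N : ℕ, 0 ≤ ∫ y in (0 : ℝ)..2 * N * (π / c), sin (c * y) * g y := by
    intro N
    have hsum := intervalIntegral.sum_integral_adjacent_intervals (μ := volume)
      (f := fun y => sin (c * y) * g y) (a := fun n : ℕ => 2 * n * (π / c)) (n := N)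
      fun n _ => hint' _ _ (by positivity) (by positivity)
    simp only [Nat.cast_zero, mul_zero, zero_mul, Nat.cast_succ] at hsum
    rw [← hsum]
    exact Finset.sum_nonneg fun n _ => intervalIntegral_sin_mul_antitone_period_nonneg hc hch hg n
      (hint' _ _ (by positivity) (by positivity))
  have hlim : Tendsto (fun N : ℕ => ∫ y in (0 : ℝ)..2 * N * (π / c), sin (c * y) * g y) atTop
      (nhds (∫ y in Ioi 0, sin (c * y) * g y)) :=
    intervalIntegral_tendsto_integral_Ioi 0 hint
      ((tendsto_natCast_atTop_atTop.const_mul_atTop two_pos).atTop_mul_const hh)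
  exact ge_of_tendsto' hlim hperiods

end SineIntegral

open Complex ComplexConjugate Real

theorem Complex.arg_div_eq_arg_mul_conj (z w : ℂ) : arg (z / w) = arg (z * conj w) := by
  rcases eq_or_ne w 0 with rfl | hw
  · simp
  · rw [div_eq_mul_inv, inv_def, ← mul_assoc, mul_comm]
    exact arg_real_mul _ (inv_pos.2 (normSq_pos.2 hw))

lemma Complex.ofReal_re_mul_one_add_div_mul_I {z : ℂ} (hz : z.re ≠ 0) :
    (z.re : ℂ) * (1 + ((z.im / z.re : ℝ) : ℂ) * I) = z := by
  apply Complex.ext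
  · simp
  · simp; field_simp

lemma im_cexp_I_mul_ofReal_mul (r s : ℝ) : (cexp (I * r) * s).im = Real.sin r * s := by
  rw [mul_comm I, exp_mul_I]
  simp [← ofReal_cos, ← ofReal_sin, mul_im]

theorem im_integral_Ioi_cexp_I_mul_antitone_nonneg {c : ℝ} (hc : 0 < c) {g : ℝ → ℝ}
    (hg : AntitoneOn g (Ioi 0))
    (hint : IntegrableOn (fun y : ℝ => cexp (I * ((c * y : ℝ) : ℂ)) * g y) (Ioi 0)) :
    0 ≤ (∫ y in Ioi 0, cexp (I * ((c * y : ℝ) : ℂ)) * g y).im := by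
  have him : ∀ y : ℝ, (cexp (I * ((c * y : ℝ) : ℂ)) * g y).im = Real.sin (c * y) * g y :=
    fun y => im_cexp_I_mul_ofReal_mul _ _
  have hint_im := hint.im
  have hintegral_im := integral_im hint
  simp only [RCLike.im_eq_complex_im, him] at hint_im hintegral_im
  exact hintegral_im ▸ integral_Ioi_sin_mul_antitone_nonneg hc hg hint_im

lemma conj_cexp_neg_mul_ofReal (a t y m : ℝ) :
    conj (cexp (-(a * (1 + t * I) * y)) * m)
      = cexp (I * ((a * t * y : ℝ) : ℂ)) * ((rexp (-(a * y)) * m : ℝ) : ℂ) := by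
  push_cast
  rw [map_mul, ← exp_conj, conj_ofReal, ← mul_assoc, ← Complex.exp_add]
  congr 2
  apply Complex.ext <;> simp

lemma integral_Ioi_cexp_I_mul_eq_conj (a t : ℝ) (m : ℝ → ℝ) :
    ∫ y in Ioi 0, cexp (I * ((a * t * y : ℝ) : ℂ)) * ((rexp (-(a * y)) * m y : ℝ) : ℂ)
      = conj (∫ y in Ioi (0 : ℝ), cexp (-(a * (1 + t * I) * y)) * m y) := by
  simp only [← integral_conj, conj_cexp_neg_mul_ofReal]

theorem im_phiStarBar_nonneg {q a t : ℝ} (hq : 0 ≤ q) (ha : 0 < a) (ht : 0 < t) {m : ℝ → ℝ}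
    (hnn : ∀ y, 0 < y → 0 ≤ m y) (hmono : AntitoneOn m (Ioi 0))
    (hint : IntegrableOn (fun y : ℝ => cexp (-(a * (1 + t * I) * y)) * m y) (Ioi 0)) :
    0 ≤ ((q : ℂ) * (a * (1 + t * I)) + (‖(a : ℂ) * (1 + t * I)‖ ^ 2 : ℝ) *
      ∫ y in Ioi 0, cexp (I * ((a * t * y : ℝ) : ℂ)) * ((rexp (-(a * y)) * m y : ℝ) : ℂ)).im := by
  have hanti : AntitoneOn (fun y => rexp (-(a * y)) * m y) (Ioi 0) := fun x hx y hy hxy =>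
    mul_le_mul (exp_le_exp.2 (by nlinarith)) (hmono hx hy hxy) (hnn y hy) (exp_nonneg _)
  have hintF := conjLIE.integrable_comp_iff.2 hint
  simp only [conjLIE_apply, conj_cexp_neg_mul_ofReal] at hintF
  simp only [add_im, im_ofReal_mul]
  exact add_nonneg (mul_nonneg hq (by simpa using (mul_pos ha ht).le)) (mul_nonneg (by positivity)
    (im_integral_Ioi_cexp_I_mul_antitone_nonneg (mul_pos ha ht) hanti hintF))

theorem arg_phistar_nonneg
    (q : ℝ) (hq : 0 ≤ q)
    (mubar : ℝ → ℝ)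
    (hnn : ∀ y : ℝ, 0 < y → 0 ≤ mubar y)
    (hmono : AntitoneOn mubar (Set.Ioi 0))
    (φ : ℂ → ℂ)
    (hφ : ∀ z : ℂ, 0 < z.re →
      φ z = (q : ℂ) + z * ∫ y in Set.Ioi (0:ℝ),
        Complex.exp (-(z * (y : ℂ))) * (mubar y : ℂ))
    (hint : ∀ z : ℂ, 0 < z.re →
      IntegrableOn (fun y : ℝ => Complex.exp (-(z * (y : ℂ))) * (mubar y : ℂ))
        (Set.Ioi 0))
    (F : ℝ → ℝ → ℂ)
    (hF : ∀ a t : ℝ, F a t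
      = (q : ℂ) * ((a : ℂ) * (1 + (t : ℂ) * Complex.I))
        + (‖(a : ℂ) * (1 + (t : ℂ) * Complex.I)‖ ^ 2 : ℝ)
          * ∫ y in Set.Ioi (0:ℝ),
              Complex.exp (Complex.I * ((a * t * y : ℝ) : ℂ))
                * ((Real.exp (-(a * y)) * mubar y : ℝ) : ℂ)) :
    (∀ a t : ℝ, 0 < a → 0 < t →
      Complex.arg (((a : ℂ) * (1 + (t : ℂ) * Complex.I))
          / φ ((a : ℂ) * (1 + (t : ℂ) * Complex.I)))
        = Complex.arg (F a t)
      ∧ 0 ≤ (F a t).im)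
    ∧ (∀ z : ℂ, 0 < z.re → 0 < z.im → 0 ≤ Complex.arg (z / φ z)) := by
  have key : ∀ a t : ℝ, 0 < a → 0 < t →
      arg (a * (1 + t * I) / φ (a * (1 + t * I))) = arg (F a t) ∧ 0 ≤ (F a t).im := by
    intro a t ha ht
    have hz : 0 < (a * (1 + t * I) : ℂ).re := by simpa
    have hFz : F a t = a * (1 + t * I) * conj (φ (a * (1 + t * I))) := by
      rw [hF, integral_Ioi_cexp_I_mul_eq_conj, hφ _ hz, Complex.sq_norm, ← mul_conj]
      simp only [map_add, map_mul, conj_ofReal]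
      ring
    refine ⟨by rw [arg_div_eq_arg_mul_conj, hFz], ?_⟩
    rw [hF]
    exact im_phiStarBar_nonneg hq ha ht hnn hmono (hint _ hz)
  refine ⟨key, fun z hre him => ?_⟩
  obtain ⟨harg, him⟩ := key z.re (z.im / z.re) hre (div_pos him hre)
  rw [ofReal_re_mul_one_add_div_mul_I hre.ne'] at harg
  exact harg ▸ arg_nonneg_iff.2 him
end
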